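/- Let μ_A be the measure on ℝ with density (8/5)·(indicator of ((0,1/4) ∪ (1/2,3/4))) + (2/5)·(indicator of ([0,1] \ ((0,1/4) ∪ (1/2,3/4)))), and let μ_B be the measure on ℝ with density (8/5)·(indicator of ((1/4,1/2) ∪ (3/4,1))) + (2/5)·(indicator of ([0,1] \ ((1/4,1/2) ∪ (3/4,1)))), both with respect to Lebesgue measure. Then μ_A([0,1/2]) = 1/2 and μ_B([1/2,1]) = 1/2, whereas, with T = (0,1/4) ∪ (1/2,3/4), the sets T and [0,1] \ T are disjoint with union [0,1] and satisfy μ_A(T) = 4/5 and μ_B([0,1] \ T) = 4/5. Hence allocating T to A and its complement in [0,1] to B is strictly better for both players than the single-cut allocation at 1/2, which gives each player exactly 1/2. -/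
import Mathlib


open MeasureTheory Set

/-- The piece of cake favored by player A. -/
def T : Set ℝ := Ioo 0 (1/4) ∪ Ioo (1/2) (3/4)

/-- The piece of cake favored by player B. -/
def TB : Set ℝ := Ioo (1/4) (1/2) ∪ Ioo (3/4) 1

/-- Player A's value measure: density 1.6 on `T`, 0.4 on the rest of `[0,1]`. -/
noncomputable def muA : Measure ℝ :=
  volume.withDensity (fun x =>
    (8/5 : ENNReal) * T.indicator 1 x + (2/5 : ENNReal) * (Icc (0:ℝ) 1 \ T).indicator 1 x)

/-- Player B's value measure: density 1.6 on `TB`, 0.4 on the rest of `[0,1]`. -/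
noncomputable def muB : Measure ℝ :=
  volume.withDensity (fun x =>
    (8/5 : ENNReal) * TB.indicator 1 x + (2/5 : ENNReal) * (Icc (0:ℝ) 1 \ TB).indicator 1 x)

lemma key (t u s : Set ℝ) (ht : MeasurableSet t) (hu : MeasurableSet u) (hs : MeasurableSet s) :
    volume.withDensity (fun x => (8/5 : ENNReal) * t.indicator 1 x + (2/5 : ENNReal) * u.indicator 1 x) s
      = 8/5 * volume (t ∩ s) + 2/5 * volume (u ∩ s) := by
  rw [withDensity_apply _ hs,
    lintegral_add_left (((measurable_one.indicator ht).const_mul _)),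
    lintegral_const_mul' _ _ (ENNReal.div_lt_top (by norm_num) (by norm_num)).ne,
    lintegral_const_mul' _ _ (ENNReal.div_lt_top (by norm_num) (by norm_num)).ne,
    lintegral_indicator_one ht, lintegral_indicator_one hu,
    Measure.restrict_apply ht, Measure.restrict_apply hu]

lemma mT : MeasurableSet T := (measurableSet_Ioo).union measurableSet_Ioo
lemma mTB : MeasurableSet TB := (measurableSet_Ioo).union measurableSet_Ioo

lemma e1 : T ∩ Icc (0:ℝ) (1/2) = Ioo 0 (1/4) := by
  ext x
  simp only [T, mem_union, mem_inter_iff, mem_Ioo, mem_Icc]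
  constructor
  · rintro ⟨h1 | h1, h2⟩
    · exact h1
    · exact absurd h2.2 (by linarith [h1.1])
  · rintro ⟨h1, h2⟩; exact ⟨Or.inl ⟨h1, h2⟩, by constructor <;> linarith⟩

lemma e2 : (Icc (0:ℝ) 1 \ T) ∩ Icc (0:ℝ) (1/2) = {0} ∪ Icc (1/4) (1/2) := by
  ext x
  simp only [T, mem_union, mem_inter_iff, mem_Icc, mem_diff, mem_Ioo, mem_singleton_iff,
    not_or, not_and, not_lt]
  constructor
  · rintro ⟨⟨⟨h0, h1⟩, hn1, hn2⟩, h2, h3⟩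
    rcases eq_or_lt_of_le h0 with h | h
    · exact Or.inl h.symm
    · exact Or.inr ⟨hn1 h, h3⟩
  · rintro (rfl | ⟨h1, h2⟩)
    · norm_num
    · refine ⟨⟨⟨by linarith, by linarith⟩, fun _ => h1, fun h => ?_⟩, by linarith, h2⟩
      linarith

lemma e3 : TB ∩ Icc (1/2:ℝ) 1 = Ioo (3/4) 1 := by
  ext x
  simp only [TB, mem_union, mem_inter_iff, mem_Ioo, mem_Icc]
  constructor
  · rintro ⟨h1 | h1, h2⟩
    · exact absurd h2.1 (by linarith [h1.2])
    · exact h1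
  · rintro ⟨h1, h2⟩; exact ⟨Or.inr ⟨h1, h2⟩, by constructor <;> linarith⟩

lemma e4 : (Icc (0:ℝ) 1 \ TB) ∩ Icc (1/2:ℝ) 1 = Icc (1/2:ℝ) (3/4) ∪ {1} := by
  ext x
  simp only [TB, mem_union, mem_inter_iff, mem_Icc, mem_diff, mem_Ioo, mem_singleton_iff,
    not_or, not_and, not_lt]
  constructor
  · rintro ⟨⟨⟨h0, h1⟩, hn1, hn2⟩, h2, h3⟩
    rcases eq_or_lt_of_le h3 with h | h
    · exact Or.inr h
    · exact Or.inl ⟨h2, by by_contra hc; push_neg at hc; linarith [hn2 hc]⟩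
  · rintro (⟨h1, h2⟩ | rfl)
    · exact ⟨⟨⟨by linarith, by linarith⟩, fun h => by linarith, fun h => by linarith⟩,
        h1, by linarith⟩
    · norm_num

lemma e5 : TB ∩ (Icc (0:ℝ) 1 \ T) = TB := by
  apply inter_eq_left.mpr
  intro x hx
  simp only [TB, mem_union, mem_Ioo] at hx
  simp only [T, mem_diff, mem_Icc, mem_union, mem_Ioo, not_or, not_and, not_lt]
  rcases hx with ⟨h1, h2⟩ | ⟨h1, h2⟩
  · exact ⟨⟨by linarith, by linarith⟩, fun h => by linarith, fun h => by linarith⟩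
  · exact ⟨⟨by linarith, by linarith⟩, fun h => by linarith, fun h => by linarith⟩

lemma e6 : (Icc (0:ℝ) 1 \ TB) ∩ (Icc (0:ℝ) 1 \ T) ⊆ {0, 1/4, 1/2, 3/4, 1} := by
  intro x hx
  simp only [TB, T, mem_diff, mem_inter_iff, mem_Icc, mem_union, mem_Ioo, not_or, not_and,
    not_lt] at hx
  obtain ⟨⟨⟨h0, h1⟩, hb1, hb2⟩, _, ha1, ha2⟩ := hx
  simp only [mem_insert_iff, mem_singleton_iff]
  rcases eq_or_lt_of_le h0 with h | h
  · exact Or.inl h.symm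
  rcases eq_or_lt_of_le (ha1 h) with h4 | h4
  · exact Or.inr (Or.inl h4.symm)
  rcases eq_or_lt_of_le (hb1 h4) with h5 | h5
  · exact Or.inr (Or.inr (Or.inl h5.symm))
  rcases eq_or_lt_of_le (ha2 h5) with h6 | h6
  · exact Or.inr (Or.inr (Or.inr (Or.inl h6.symm)))
  · exact Or.inr (Or.inr (Or.inr (Or.inr (le_antisymm h1 (hb2 h6)))))

lemma TsubIcc : T ⊆ Icc (0:ℝ) 1 := by
  rintro x hx
  simp only [T, mem_union, mem_Ioo] at hx
  simp only [mem_Icc]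
  rcases hx with ⟨h1, h2⟩ | ⟨h1, h2⟩ <;> constructor <;> linarith

lemma comb (a b c : ℝ) (ha : 0 ≤ a) (hb : 0 ≤ b)
    (h : 8/5 * a + 2/5 * b = c) :
    (8/5 : ENNReal) * ENNReal.ofReal a + 2/5 * ENNReal.ofReal b = ENNReal.ofReal c := by
  rw [show (8/5:ENNReal) = ENNReal.ofReal (8/5) by simp [ENNReal.ofReal_div_of_pos],
      show (2/5:ENNReal) = ENNReal.ofReal (2/5) by simp [ENNReal.ofReal_div_of_pos],
      ← ENNReal.ofReal_mul (by norm_num), ← ENNReal.ofReal_mul (by norm_num),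
      ← ENNReal.ofReal_add (by positivity) (by positivity), h]

lemma half : ENNReal.ofReal (1/2) = 1/2 := by
  rw [ENNReal.ofReal_div_of_pos (by norm_num)]; norm_num

lemma fourfifths : ENNReal.ofReal (4/5) = 4/5 := by
  rw [ENNReal.ofReal_div_of_pos (by norm_num)]; norm_num

/-- The Surplus Procedure cut at `1/2` gives each player value `1/2`, while allocating
`T` to A and `[0,1] \ T` to B gives each player value `4/5`: the cut at `1/2` is not
Pareto optimal. -/
theorem sp_not_pareto_optimal :
    muA (Icc (0:ℝ) (1/2)) = 1/2 ∧
    muB (Icc (1/2:ℝ) 1) = 1/2 ∧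
    Disjoint T (Icc (0:ℝ) 1 \ T) ∧
    T ∪ (Icc (0:ℝ) 1 \ T) = Icc (0:ℝ) 1 ∧
    muA T = 4/5 ∧
    muB (Icc (0:ℝ) 1 \ T) = 4/5 ∧
    (1/2 : ENNReal) < 4/5 := by
  have hIccT : MeasurableSet (Icc (0:ℝ) 1 \ T) := measurableSet_Icc.diff mT
  have hIccTB : MeasurableSet (Icc (0:ℝ) 1 \ TB) := measurableSet_Icc.diff mTB
  refine ⟨?_, ?_, disjoint_sdiff_right, union_diff_cancel TsubIcc, ?_, ?_, ?_⟩
  · rw [muA, key _ _ _ mT hIccT measurableSet_Icc, e1, e2,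
      measure_union (Set.disjoint_singleton_left.mpr (by norm_num)) measurableSet_Icc,
      Real.volume_singleton, Real.volume_Ioo, Real.volume_Icc, zero_add, ← half]
    exact comb _ _ _ (by norm_num) (by norm_num) (by norm_num)
  · rw [muB, key _ _ _ mTB hIccTB measurableSet_Icc, e3, e4,
      measure_union (Set.disjoint_singleton_right.mpr (by simp; norm_num)) (measurableSet_singleton _),
      Real.volume_singleton, Real.volume_Ioo, Real.volume_Icc, add_zero, ← half]
    exact comb _ _ _ (by norm_num) (by norm_num) (by norm_num)
  · rw [muA, key _ _ _ mT hIccT mT, inter_self, diff_inter_self, measure_empty, mul_zero,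
      add_zero, T,
      measure_union (by rw [Set.disjoint_left]; rintro x ⟨_, h⟩ ⟨h', _⟩; linarith) measurableSet_Ioo,
      Real.volume_Ioo, Real.volume_Ioo, ← ENNReal.ofReal_add (by norm_num) (by norm_num),
      ← fourfifths,
      show (8/5:ENNReal) = ENNReal.ofReal (8/5) by simp [ENNReal.ofReal_div_of_pos],
      ← ENNReal.ofReal_mul (by norm_num)]
    congr 1
    norm_num
  · rw [muB, key _ _ _ mTB hIccTB hIccT, e5,
      measure_mono_null e6 ((Set.finite_singleton _).insert _ |>.insert _ |>.insert _
        |>.insert _ |>.measure_zero _), mul_zero, add_zero, TB,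
      measure_union (by rw [Set.disjoint_left]; rintro x ⟨_, h⟩ ⟨h', _⟩; linarith) measurableSet_Ioo,
      Real.volume_Ioo, Real.volume_Ioo, ← ENNReal.ofReal_add (by norm_num) (by norm_num),
      ← fourfifths,
      show (8/5:ENNReal) = ENNReal.ofReal (8/5) by simp [ENNReal.ofReal_div_of_pos],
      ← ENNReal.ofReal_mul (by norm_num)]
    norm_num
  · rw [← half, ← fourfifths]
    exact (ENNReal.ofReal_lt_ofReal_iff (by norm_num)).mpr (by norm_num)
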